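/- The initial critical exponent of the infinite Tribonacci word T (the supremum of exponents of its nonempty prefixes) equals ρ - 1, where ρ = 5/2 + α^{-1} + (1/2)α^{-2} and α is the real root of x³ - x² - x - 1. -/

import Mathlib

/-- The Tribonacci morphism: 0 → 01, 1 → 02, 2 → 0. -/
def tribMap (c : ℕ) : List ℕ := if c = 0 then [0,1] else if c = 1 then [0,2] else [0]

/-- Iterates of the Tribonacci morphism on the word `0`. -/
def tribIter : ℕ → List ℕ
  | 0 => [0]
  | k+1 => (tribIter k).flatMap tribMap

/-- The infinite Tribonacci word, the fixed point starting with 0 of 0→01, 1→02, 2→0. -/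
def tribWord (n : ℕ) : ℕ := (tribIter (n+1)).getD n 0

/-- The Tribonacci numbers. -/
def trib : ℕ → ℕ
  | 0 => 0
  | 1 => 1
  | 2 => 1
  | n+3 => trib (n+2) + trib (n+1) + trib n

/-- `p` is a period of the length-`n` prefix of the Tribonacci word. -/
def IsPrefixPeriod (n p : ℕ) : Prop :=
  0 < p ∧ ∀ k, k + p < n → tribWord k = tribWord (k + p)

/-- The set of exponents of nonempty prefixes of the Tribonacci word. -/
def tribPrefixExponents : Set ℝ :=
  {e | ∃ n p : ℕ, 0 < n ∧ IsLeast {q | IsPrefixPeriod n q} p ∧ e = (n : ℝ) / p}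

/-!
Let `c₀ = ε` and `c_{j+1} = σ(c_j) 0`, where `σ` is the Tribonacci morphism. Then
`c_{j+1} = σʲ(0) c_j`, each `c_j` is a prefix of `T`, and in `T` the prefix `c_j` is followed by
the letter `j mod 3`. Hence `|σʲ(0)| = trib (j + 2)` is a period of the prefix of length
`|c_{j+1}|`, and it is the least period of every prefix of length in `(|c_j|, |c_{j+1}|]`.
Minimality is a descent: since `c_{j+1}` occurs at position `trib (j + 3)`, a period
`q ∈ (trib (j + 3), trib (j + 4))` of the prefix of length `|c_{j+2}| + 1` yields the shorter
period `q - trib (j + 3)` of `c_{j+1}`, and so on one step further down, while the boundary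
values `q = trib (j + 3)` and `q = trib (j + 3) + trib (j + 2)` would make the letter after
`c_{j+2}` equal to the one after `c_{j+1}`, resp. `c_j`. So the exponents are bounded by, and
accumulate at the limit of, the ratios
`|c_{j+1}| / trib (j + 2) = (trib (j + 4) + trib (j + 2) - 3) / (2 trib (j + 2))`.

The error `e_k = trib (k + 1) - α trib k` is annihilated by the factor
`x² + (α - 1) x + α⁻¹` of the Tribonacci polynomial, whose roots have modulus `α^(-1/2)`, so the
positive definite form `α x² - α (1 - α) x y + y²` at `(e_{k+1}, e_k)` equals `α⁻ᵏ ≤ 1`. This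
gives `|trib (k + 2) - α² trib k| ≤ 3`, so the ratios stay below `(α² + 1) / 2 = ρ - 1` and tend
to it.
-/

open Filter Topology

theorem trib_succ_pos (n : ℕ) : 0 < trib (n + 1) := by
  induction n using Nat.strong_induction_on with
  | _ n ih =>
    match n with
    | 0 | 1 => decide
    | m + 2 =>
      show 0 < trib (m + 2) + trib (m + 1) + trib m
      have : 0 < trib (m + 2) := ih (m + 1) (by omega)
      omega

theorem lt_trib_add_two (n : ℕ) : n < trib (n + 2) := by
  induction n with
  | zero => decide
  | succ n ih =>
    show n + 1 < trib (n + 2) + trib (n + 1) + trib n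
    have := trib_succ_pos n; omega

theorem tribIter_add_three (m : ℕ) :
    tribIter (m + 3) = tribIter (m + 2) ++ tribIter (m + 1) ++ tribIter m := by
  induction m with
  | zero => decide
  | succ m ih =>
    show (tribIter (m + 3)).flatMap tribMap =
      tribIter (m + 3) ++ tribIter (m + 2) ++ tribIter (m + 1)
    conv_lhs => rw [ih]
    simp only [List.flatMap_append]; rfl

theorem length_tribIter (j : ℕ) : (tribIter j).length = trib (j + 2) := by
  induction j using Nat.strong_induction_on with
  | _ j ih =>
    match j with
    | 0 | 1 | 2 => rfl
    | m + 3 =>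
      rw [tribIter_add_three, List.length_append, List.length_append, ih (m + 2) (by omega),
        ih (m + 1) (by omega), ih m (by omega)]
      rfl

theorem tribIter_prefix_succ (j : ℕ) : tribIter j <+: tribIter (j + 1) := by
  match j with
  | 0 | 1 => decide
  | m + 2 => rw [tribIter_add_three]; exact (List.prefix_append _ _).trans (List.prefix_append _ _)

theorem tribIter_prefix_of_le {j m : ℕ} (h : j ≤ m) : tribIter j <+: tribIter m := by
  induction m, h using Nat.le_induction with
  | base => exact List.prefix_refl _
  | succ m _ ih => exact ih.trans (tribIter_prefix_succ m)

theorem List.IsPrefix.getD_eq {α : Type*} {u v : List α} (h : u <+: v) {i : ℕ}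
    (hi : i < u.length) (d : α) : u.getD i d = v.getD i d := by
  obtain ⟨t, rfl⟩ := h
  exact (List.getD_append _ _ _ _ hi).symm

def IsTribPrefix (u : List ℕ) : Prop := ∃ m, u <+: tribIter m

theorem IsTribPrefix.mono {u v : List ℕ} (h : u <+: v) (hv : IsTribPrefix v) : IsTribPrefix u :=
  hv.imp fun _ hm => h.trans hm

theorem IsTribPrefix.getD_eq {u : List ℕ} (h : IsTribPrefix u) {i : ℕ} (hi : i < u.length) :
    u.getD i 0 = tribWord i := by
  obtain ⟨m, hm⟩ := h
  have hi' : i < (tribIter (i + 1)).length := by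
    rw [length_tribIter]; have := lt_trib_add_two (i + 1); omega
  rw [tribWord, (hm.trans (tribIter_prefix_of_le (le_max_left m (i + 1)))).getD_eq hi,
    (tribIter_prefix_of_le (le_max_right m (i + 1))).getD_eq hi']

theorem IsTribPrefix.flatMap_append_zero {u : List ℕ} (h : IsTribPrefix u) :
    IsTribPrefix (u.flatMap tribMap ++ [0]) := by
  obtain ⟨m, hm⟩ := h
  obtain ⟨t, ht⟩ := hm.trans (tribIter_prefix_of_le (Nat.le_add_right m u.length))
  have hlen : u.length < (tribIter (m + u.length)).length := by
    rw [length_tribIter]; have := lt_trib_add_two (m + u.length); omega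
  obtain ⟨c, t, rfl⟩ : ∃ c t', t = c :: t' := by
    cases t with
    | nil => simp [← ht] at hlen
    | cons c t' => exact ⟨c, t', rfl⟩
  refine ⟨m + u.length + 1, (tribMap c).tail ++ t.flatMap tribMap, ?_⟩
  have hc : tribMap c = 0 :: (tribMap c).tail := by unfold tribMap; split_ifs <;> rfl
  rw [tribIter, ← ht, List.flatMap_append, List.flatMap_cons, hc]
  simp

def critPrefix : ℕ → List ℕ
  | 0 => []
  | j + 1 => (critPrefix j).flatMap tribMap ++ [0]

theorem critPrefix_succ (j : ℕ) : critPrefix (j + 1) = tribIter j ++ critPrefix j := by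
  induction j with
  | zero => rfl
  | succ j ih =>
    show (critPrefix (j + 1)).flatMap tribMap ++ [0] = tribIter (j + 1) ++ critPrefix (j + 1)
    conv_lhs => rw [ih]
    rw [List.flatMap_append, List.append_assoc]
    rfl

theorem length_critPrefix_succ (j : ℕ) :
    (critPrefix (j + 1)).length = trib (j + 2) + (critPrefix j).length := by
  rw [critPrefix_succ, List.length_append, length_tribIter]

theorem two_mul_length_critPrefix (j : ℕ) :
    2 * (critPrefix j).length + 3 = trib (j + 3) + trib (j + 1) := by
  induction j with
  | zero => rfl
  | succ j ih =>
    show 2 * (critPrefix (j + 1)).length + 3 = trib (j + 4) + trib (j + 2)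
    rw [length_critPrefix_succ]
    have : trib (j + 4) = trib (j + 3) + trib (j + 2) + trib (j + 1) := rfl
    omega

theorem tribMap_append_zero {c : ℕ} (hc : c < 3) :
    ∃ t, tribMap c ++ [0] = 0 :: (c + 1) % 3 :: t := by
  interval_cases c <;> exact ⟨_, rfl⟩

theorem isTribPrefix_critPrefix_append_mod_three (j : ℕ) :
    IsTribPrefix (critPrefix j ++ [j % 3]) := by
  induction j with
  | zero => exact ⟨0, List.prefix_refl _⟩
  | succ j ih =>
    obtain ⟨t, ht⟩ := tribMap_append_zero (Nat.mod_lt j (by norm_num))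
    refine ih.flatMap_append_zero.mono ⟨t, ?_⟩
    rw [critPrefix, List.flatMap_append, List.flatMap_singleton, List.append_assoc _ (tribMap _),
      ht, show (j % 3 + 1) % 3 = (j + 1) % 3 by omega]
    simp

theorem tribWord_length_critPrefix (j : ℕ) : tribWord (critPrefix j).length = j % 3 := by
  rw [← (isTribPrefix_critPrefix_append_mod_three j).getD_eq (by simp)]
  simp

theorem tribWord_lt_length_critPrefix {j i : ℕ} (hi : i < (critPrefix j).length) :
    tribWord i = (critPrefix j).getD i 0 :=
  ((isTribPrefix_critPrefix_append_mod_three j).mono (List.prefix_append _ _) |>.getD_eq hi).symm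

theorem tribWord_trib_add {j i : ℕ} (hi : i < (critPrefix j).length) :
    tribWord (trib (j + 2) + i) = tribWord i := by
  have hi' : trib (j + 2) + i < (critPrefix (j + 1)).length := by
    rw [length_critPrefix_succ]; omega
  rw [tribWord_lt_length_critPrefix hi, tribWord_lt_length_critPrefix hi', critPrefix_succ,
    List.getD_append_right _ _ _ _ (by rw [length_tribIter]; omega), length_tribIter,
    Nat.add_sub_cancel_left]

theorem IsPrefixPeriod.mono {n m q : ℕ} (hq : IsPrefixPeriod n q) (hmn : m ≤ n) :
    IsPrefixPeriod m q :=
  ⟨hq.1, fun k hk => hq.2 k (by omega)⟩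

theorem isPrefixPeriod_trib (j : ℕ) :
    IsPrefixPeriod (critPrefix (j + 1)).length (trib (j + 2)) := by
  refine ⟨trib_succ_pos (j + 1), fun k hk => ?_⟩
  rw [length_critPrefix_succ] at hk
  rw [add_comm k, tribWord_trib_add (by omega)]

theorem IsPrefixPeriod.sub_trib {j q : ℕ} (hq : IsPrefixPeriod (critPrefix (j + 1)).length q)
    (hlt : trib (j + 2) < q) : IsPrefixPeriod (critPrefix j).length (q - trib (j + 2)) := by
  refine ⟨by omega, fun k hk => ?_⟩
  have hlen := length_critPrefix_succ j
  rw [hq.2 k (by omega), ← tribWord_trib_add hk]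
  congr 1
  omega

theorem not_isPrefixPeriod_of_mod_three_ne {j m p : ℕ}
    (hp : (critPrefix j).length + p = (critPrefix m).length) (hjm : j % 3 ≠ m % 3) :
    ¬ IsPrefixPeriod ((critPrefix m).length + 1) p := fun hq =>
  hjm <| by
    rw [← tribWord_length_critPrefix, hq.2 _ (by omega), hp, tribWord_length_critPrefix]

theorem trib_add_four_le_of_isPrefixPeriod {j q : ℕ}
    (ih₂ : ∀ q, IsPrefixPeriod ((critPrefix (j + 1)).length + 1) q → trib (j + 3) ≤ q)
    (ih₁ : ∀ q, IsPrefixPeriod ((critPrefix j).length + 1) q → trib (j + 2) ≤ q)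
    (ih₀ : ∀ q, IsPrefixPeriod (critPrefix j).length q → trib (j + 1) ≤ q)
    (hq : IsPrefixPeriod ((critPrefix (j + 2)).length + 1) q) : trib (j + 4) ≤ q := by
  by_contra! hlt
  have h₁ := length_critPrefix_succ j
  have h₂ : (critPrefix (j + 2)).length = trib (j + 3) + (critPrefix (j + 1)).length :=
    length_critPrefix_succ (j + 1)
  have htrib : trib (j + 4) = trib (j + 3) + trib (j + 2) + trib (j + 1) := rfl
  have hpos : 0 < trib (j + 2) := trib_succ_pos (j + 1)
  rcases lt_trichotomy q (trib (j + 3)) with hq₁ | rfl | hq₁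
  · exact hq₁.not_ge (ih₂ q (hq.mono (by omega)))
  · exact not_isPrefixPeriod_of_mod_three_ne (j := j + 1) (by omega) (by omega) hq
  have hd : IsPrefixPeriod (critPrefix (j + 1)).length (q - trib (j + 3)) :=
    (hq.mono (Nat.le_succ _)).sub_trib hq₁
  rcases lt_trichotomy (q - trib (j + 3)) (trib (j + 2)) with hq₂ | hq₂ | hq₂
  · exact hq₂.not_ge (ih₁ _ (hd.mono (by omega)))
  · exact not_isPrefixPeriod_of_mod_three_ne (j := j) (by omega) (by omega) hq
  · have he : IsPrefixPeriod (critPrefix j).length (q - trib (j + 3) - trib (j + 2)) :=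
      hd.sub_trib hq₂
    exact (ih₀ _ he).not_gt (by omega)

theorem trib_le_of_isPrefixPeriod (j : ℕ) {q : ℕ}
    (hq : IsPrefixPeriod ((critPrefix j).length + 1) q) : trib (j + 2) ≤ q := by
  induction j using Nat.strong_induction_on generalizing q with
  | _ j ih =>
    match j with
    | 0 => exact hq.1
    | 1 =>
      by_contra! hlt
      obtain rfl : q = 1 := by have := hq.1; simp only [trib] at hlt; omega
      exact absurd (hq.2 0 (by decide)) (by decide)
    | j + 2 =>
      refine trib_add_four_le_of_isPrefixPeriod (fun q => ih (j + 1) (by omega))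
        (fun q => ih j (by omega)) ?_ hq
      obtain _ | j := j
      · exact fun q hq => hq.1
      · refine fun q hq => ih j (by omega) (hq.mono ?_)
        have : 0 < trib (j + 2) := trib_succ_pos (j + 1)
        rw [length_critPrefix_succ]
        omega

theorem isLeast_isPrefixPeriod {j n : ℕ} (hjn : (critPrefix j).length < n)
    (hn : n ≤ (critPrefix (j + 1)).length) : IsLeast {q | IsPrefixPeriod n q} (trib (j + 2)) :=
  ⟨(isPrefixPeriod_trib j).mono hn, fun _ hq => trib_le_of_isPrefixPeriod j (hq.mono hjn)⟩

theorem exists_length_critPrefix_lt_le {n : ℕ} (hn : 0 < n) :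
    ∃ j, (critPrefix j).length < n ∧ n ≤ (critPrefix (j + 1)).length := by
  have hlen (j : ℕ) : j ≤ (critPrefix j).length := by
    induction j with
    | zero => exact Nat.zero_le _
    | succ j ih =>
      have : 0 < trib (j + 2) := trib_succ_pos (j + 1)
      rw [length_critPrefix_succ]; omega
  have hex : ∃ j, n ≤ (critPrefix j).length := ⟨n, hlen n⟩
  obtain ⟨j, hj⟩ : ∃ j, Nat.find hex = j + 1 := by
    refine Nat.exists_eq_add_one.mpr (Nat.pos_of_ne_zero fun h0 => ?_)
    have := Nat.find_spec hex
    rw [h0, critPrefix, List.length_nil] at this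
    omega
  exact ⟨j, not_le.mp (Nat.find_min hex (by omega)), hj ▸ Nat.find_spec hex⟩

theorem exists_le_div_of_mem_tribPrefixExponents {e : ℝ} (he : e ∈ tribPrefixExponents) :
    ∃ j, e ≤ ((critPrefix (j + 1)).length : ℝ) / trib (j + 2) := by
  obtain ⟨n, p, hn, hp, rfl⟩ := he
  obtain ⟨j, hjn, hnj⟩ := exists_length_critPrefix_lt_le hn
  refine ⟨j, ?_⟩
  rw [hp.unique (isLeast_isPrefixPeriod hjn hnj)]
  gcongr

theorem div_mem_tribPrefixExponents (j : ℕ) :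
    ((critPrefix (j + 1)).length : ℝ) / trib (j + 2) ∈ tribPrefixExponents := by
  have hlen := length_critPrefix_succ j
  have hpos : 0 < trib (j + 2) := trib_succ_pos (j + 1)
  exact ⟨_, _, by omega, isLeast_isPrefixPeriod (j := j) (by omega) le_rfl, rfl⟩

theorem pow_mul_quadForm_eq {p a : ℝ} {x : ℕ → ℝ} (hx : ∀ k, p * x (k + 2) = a * x (k + 1) - x k)
    (k : ℕ) :
    p ^ k * (p * x (k + 1) ^ 2 - a * x (k + 1) * x k + x k ^ 2) =
      p * x 1 ^ 2 - a * x 1 * x 0 + x 0 ^ 2 := by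
  induction k with
  | zero => ring
  | succ k ih =>
    rw [← ih]
    linear_combination (p ^ k * (p * x (k + 2) - x k)) * hx k

theorem one_lt_of_cube_eq {α : ℝ} (hα : α ^ 3 = α ^ 2 + α + 1) : 1 < α := by
  nlinarith [sq_nonneg (α - 1), sq_nonneg (α + 1), sq_nonneg α]

theorem lt_two_of_cube_eq {α : ℝ} (hα : α ^ 3 = α ^ 2 + α + 1) : α < 2 := by
  nlinarith [sq_nonneg (α - 2), sq_nonneg (α + 1), sq_nonneg α]

def tribErr (α : ℝ) (k : ℕ) : ℝ := trib (k + 1) - α * trib k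

theorem mul_tribErr_add_two {α : ℝ} (hα : α ^ 3 = α ^ 2 + α + 1) (k : ℕ) :
    α * tribErr α (k + 2) = α * (1 - α) * tribErr α (k + 1) - tribErr α k := by
  have htrib : (trib (k + 3) : ℝ) = trib (k + 2) + trib (k + 1) + trib k := by
    rw [show trib (k + 3) = trib (k + 2) + trib (k + 1) + trib k from rfl]; push_cast; ring
  simp only [tribErr, htrib]
  linear_combination (-(trib (k + 1) : ℝ)) * hα

theorem pow_mul_quadForm_tribErr {α : ℝ} (hα : α ^ 3 = α ^ 2 + α + 1) (k : ℕ) :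
    α ^ k * (α * tribErr α (k + 1) ^ 2 - α * (1 - α) * tribErr α (k + 1) * tribErr α k
      + tribErr α k ^ 2) = 1 := by
  rw [pow_mul_quadForm_eq (mul_tribErr_add_two hα) k]
  simp only [tribErr, trib]
  push_cast
  ring

theorem abs_add_mul_le_three {α x y : ℝ} (hα : α ^ 3 = α ^ 2 + α + 1)
    (h : α * x ^ 2 - α * (1 - α) * x * y + y ^ 2 ≤ 1) : |x + α * y| ≤ 3 := by
  have h₁ := one_lt_of_cube_eq hα
  have h₂ := lt_two_of_cube_eq hα
  have key : 4 * (α ^ 2 + 1) * (α * x ^ 2 - α * (1 - α) * x * y + y ^ 2) =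
      (2 * (α ^ 2 + 1) * y - α * (1 + α) * (x + α * y)) ^ 2
        + (-α ^ 2 + 4 * α + 1) * (x + α * y) ^ 2 := by
    linear_combination (-(α - 1) * (x + α * y) ^ 2) * hα
  have hs : (-α ^ 2 + 4 * α + 1) * (x + α * y) ^ 2 ≤ 4 * (α ^ 2 + 1) := by
    nlinarith [sq_nonneg (2 * (α ^ 2 + 1) * y - α * (1 + α) * (x + α * y))]
  refine abs_le_of_sq_le_sq ?_ (by norm_num)
  nlinarith [sq_nonneg (x + α * y)]

theorem abs_trib_add_two_sub_le {α : ℝ} (hα : α ^ 3 = α ^ 2 + α + 1) (k : ℕ) :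
    |(trib (k + 2) : ℝ) - α ^ 2 * trib k| ≤ 3 := by
  have hsplit : (trib (k + 2) : ℝ) - α ^ 2 * trib k = tribErr α (k + 1) + α * tribErr α k := by
    simp only [tribErr]; ring
  rw [hsplit]
  refine abs_add_mul_le_three hα ?_
  have hQ := pow_mul_quadForm_tribErr hα k
  have hpow : 1 ≤ α ^ k := one_le_pow₀ (one_lt_of_cube_eq hα).le
  nlinarith

theorem length_critPrefix_div_trib_mem_Icc {α : ℝ} (hα : α ^ 3 = α ^ 2 + α + 1) (j : ℕ) :
    ((critPrefix (j + 1)).length : ℝ) / trib (j + 2) ∈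
      Set.Icc ((α ^ 2 + 1) / 2 - 3 / trib (j + 2)) ((α ^ 2 + 1) / 2) := by
  have hT : (0 : ℝ) < trib (j + 2) := by exact_mod_cast trib_succ_pos (j + 1)
  have hlen : 2 * ((critPrefix (j + 1)).length : ℝ) + 3 = trib (j + 4) + trib (j + 2) := by
    exact_mod_cast two_mul_length_critPrefix (j + 1)
  have herr := abs_le.mp (abs_trib_add_two_sub_le hα (j + 2))
  constructor
  · rw [sub_le_iff_le_add, ← add_div, le_div_iff₀ hT]
    linarith
  · rw [div_le_iff₀ hT]
    linarith

theorem tendsto_length_critPrefix_div_trib {α : ℝ} (hα : α ^ 3 = α ^ 2 + α + 1) :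
    Tendsto (fun j => ((critPrefix (j + 1)).length : ℝ) / trib (j + 2)) atTop
      (𝓝 ((α ^ 2 + 1) / 2)) := by
  have htrib : Tendsto (fun j => (trib (j + 2) : ℝ)) atTop atTop :=
    tendsto_natCast_atTop_atTop.comp
      (tendsto_atTop_mono (fun j => (lt_trib_add_two j).le) tendsto_id)
  have hlower : Tendsto (fun j => (α ^ 2 + 1) / 2 - 3 / (trib (j + 2) : ℝ)) atTop
      (𝓝 ((α ^ 2 + 1) / 2)) := by
    simpa using tendsto_const_nhds.sub (tendsto_const_nhds.div_atTop htrib)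
  exact tendsto_of_tendsto_of_tendsto_of_le_of_le hlower tendsto_const_nhds
    (fun j => (length_critPrefix_div_trib_mem_Icc hα j).1)
    (fun j => (length_critPrefix_div_trib_mem_Icc hα j).2)

/-- The initial critical exponent of the Tribonacci word is `ρ - 1`, where
`ρ = 5/2 + α⁻¹ + α⁻²/2` and `α` is the real root of `x³ - x² - x - 1`. -/
theorem tribWord_initial_critical_exponent (α : ℝ) (hα : α^3 = α^2 + α + 1) :
    IsLUB tribPrefixExponents (5/2 + α⁻¹ + (1/2) * α⁻¹^2 - 1) := by
  have hα₀ : α ≠ 0 := (zero_lt_one.trans (one_lt_of_cube_eq hα)).ne'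
  have hρ : 5/2 + α⁻¹ + (1/2) * α⁻¹^2 - 1 = (α ^ 2 + 1) / 2 := by
    field_simp
    linear_combination (-α - 1) * hα
  rw [hρ]
  refine ⟨fun e he => ?_, fun b hb => ?_⟩
  · obtain ⟨j, hj⟩ := exists_le_div_of_mem_tribPrefixExponents he
    exact hj.trans (length_critPrefix_div_trib_mem_Icc hα j).2
  · exact le_of_tendsto' (tendsto_length_critPrefix_div_trib hα)
      fun j => hb (div_mem_tribPrefixExponents j)
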